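/- Define the lower critical field h_ℓ := (4πJ·sinh(γ)/γ)·Σ_{n∈ℤ} 1/cosh(π²(1/2 − n)/γ) (so that ε̃(π/2) = 0 exactly when h = h_ℓ). If 0 ≤ h < h_ℓ, then ε̃(x) < 0 for every real x, and ε̃(x − iγ) is real and strictly positive for every real x. -/

import Mathlib

/-- The analytically continued dressed energy
`ε̃(x) = h/2 − (2πJ·sinh γ/γ)·Σ_{n∈ℤ} 1/cosh(π(x − nπ)/γ)`. -/
noncomputable def dressedEnergyC (γ J h : ℝ) (x : ℂ) : ℂ :=
  (h / 2 : ℝ) - ((2 * Real.pi * J * Real.sinh γ / γ : ℝ) : ℂ) *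
    ∑' n : ℤ, 1 / Complex.cosh ((Real.pi : ℂ) * (x - (n : ℂ) * Real.pi) / (γ : ℂ))

/-- The lower critical field
`h_ℓ = (4πJ·sinh γ/γ)·Σ_{n∈ℤ} 1/cosh(π²(1/2 − n)/γ)`. -/
noncomputable def lowerCriticalField (γ J : ℝ) : ℝ :=
  (4 * Real.pi * J * Real.sinh γ / γ) *
    ∑' n : ℤ, 1 / Real.cosh (Real.pi ^ 2 * (1/2 - (n : ℝ)) / γ)

open Filter Topology Real

/-!
With `c = π²/γ` and `y = πx/γ`, the series in `ε̃(x)` is `S(y) = ∑ₙ sech (y - n c)`, and the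
shift `x ↦ x - iγ` turns every `cosh` into `-cosh`, so everything reduces to the bound
`S(c/2) ≤ S(y)`. Splitting `n` by parity gives `S(y) = E(y) + E(y - c)` for the `2c`-periodic
sum `E`. By `sech A sech B = (tanh A - tanh B) / sinh (A - B)`, the product `E(y) E(y - c)`
becomes a sum of telescoping `tanh`-series and equals `∑ₖ 2k / sinh (k c)` over odd `k > 0`,
independently of `y`. Since `E` is even, AM-GM gives
`S(y) ≥ 2 √(E(y) E(y - c)) = 2 E(c/2) = S(c/2)`.
-/

namespace Real

lemma tanh_eq_one_sub (x : ℝ) : tanh x = 1 - 2 / (exp (2 * x) + 1) := by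
  have h : exp (2 * x) = exp x * exp x := by rw [← exp_add, two_mul]
  rw [tanh_eq_sinh_div_cosh, sinh_eq, cosh_eq, h, exp_neg]
  field_simp
  ring

lemma tanh_monotone : Monotone tanh := by
  intro x y hxy
  rw [tanh_eq_one_sub, tanh_eq_one_sub]
  gcongr

lemma tendsto_tanh_atTop : Tendsto tanh atTop (𝓝 1) := by
  have h : Tendsto (fun x => exp (2 * x) + 1) atTop atTop :=
    tendsto_atTop_add_const_right _ _
      (tendsto_exp_atTop.comp (tendsto_id.const_mul_atTop two_pos))
  convert tendsto_const_nhds.sub (h.const_div_atTop (2 : ℝ)) using 1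
  · exact funext tanh_eq_one_sub
  · simp

lemma tendsto_tanh_atBot : Tendsto tanh atBot (𝓝 (-1)) := by
  have h : Tendsto (fun x => exp (2 * x) + 1) atBot (𝓝 1) := by
    simpa using (tendsto_exp_atBot.comp (tendsto_id.const_mul_atBot two_pos)).add_const 1
  convert tendsto_const_nhds.sub (tendsto_const_nhds.div h one_ne_zero) using 1
  · exact funext tanh_eq_one_sub
  · norm_num

lemma one_div_cosh_mul_one_div_cosh {A B : ℝ} (h : A ≠ B) :
    1 / cosh A * (1 / cosh B) = (tanh A - tanh B) / sinh (A - B) := by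
  have hs : sinh (A - B) ≠ 0 := sinh_ne_zero.2 (sub_ne_zero.2 h)
  rw [tanh_eq_sinh_div_cosh, tanh_eq_sinh_div_cosh, div_sub_div _ _ (cosh_pos A).ne'
    (cosh_pos B).ne', ← sinh_sub]
  field_simp

lemma one_div_cosh_le_two_mul_exp_neg_abs (t : ℝ) : 1 / cosh t ≤ 2 * exp (-|t|) := by
  rw [exp_neg, div_le_iff₀ (cosh_pos t), cosh_eq]
  have := exp_abs_le t
  have := exp_pos |t|
  field_simp
  linarith

end Real

lemma hasSum_sub_succ_of_antitone {u : ℕ → ℝ} {a : ℝ} (hu : Antitone u)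
    (ha : Tendsto u atTop (𝓝 a)) : HasSum (fun n => u n - u (n + 1)) (u 0 - a) := by
  rw [hasSum_iff_tendsto_nat_of_nonneg fun n => sub_nonneg.2 (hu n.le_succ)]
  simpa only [Finset.sum_range_sub'] using tendsto_const_nhds.sub ha

namespace Int

lemma hasSum_sub_add_one_of_antitone {u : ℤ → ℝ} {a b : ℝ} (hu : Antitone u)
    (ha : Tendsto u atTop (𝓝 a)) (hb : Tendsto u atBot (𝓝 b)) :
    HasSum (fun n => u n - u (n + 1)) (b - a) := by
  have hnat : HasSum (fun n : ℕ => u n - u (n + 1)) (u 0 - a) := by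
    simpa only [Nat.cast_add, Nat.cast_one, Nat.cast_zero] using
      hasSum_sub_succ_of_antitone (u := fun n : ℕ => u n) (hu.comp_monotone Nat.mono_cast)
        (ha.comp tendsto_natCast_atTop_atTop)
  have hneg : HasSum (fun n : ℕ => u (-(n + 1)) - u (-(n + 1) + 1)) (b - u 0) := by
    have h := hasSum_sub_succ_of_antitone (u := fun n : ℕ => -u (-n))
      (fun m n hmn => neg_le_neg (hu (neg_le_neg (Nat.cast_le.2 hmn))))
      ((hb.comp (tendsto_neg_atTop_atBot.comp tendsto_natCast_atTop_atTop)).neg)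
    convert h using 1
    · funext n
      rw [show -((n : ℤ) + 1) + 1 = -n by ring, Nat.cast_add, Nat.cast_one]
      ring
    · simp only [Nat.cast_zero, neg_zero]
      ring
  convert HasSum.of_nat_of_neg_add_one (f := fun n : ℤ => u n - u (n + 1)) hnat hneg using 1
  ring

lemma hasSum_sub_add_natCast_of_antitone {u : ℤ → ℝ} {a b : ℝ} (hu : Antitone u)
    (ha : Tendsto u atTop (𝓝 a)) (hb : Tendsto u atBot (𝓝 b)) (k : ℕ) :
    HasSum (fun n => u n - u (n + k)) (k * (b - a)) := by
  induction k with
  | zero => simp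
  | succ k ih =>
    have hstep : HasSum (fun n => u (n + k) - u (n + k + 1)) (b - a) :=
      (Equiv.addRight (k : ℤ)).hasSum_iff.2 (hasSum_sub_add_one_of_antitone hu ha hb)
    convert ih.add hstep using 1
    · funext n
      push_cast
      ring_nf
    · push_cast
      ring

end Int

lemma tsum_int_even_add_odd {E : Type*} [NormedAddCommGroup E] [CompleteSpace E] {f : ℤ → E}
    (hf : Summable f) : ∑' n, f (2 * n) + ∑' n, f (2 * n + 1) = ∑' n, f n := by
  have h2 : Function.Injective fun n : ℤ => 2 * n := mul_right_injective₀ two_ne_zero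
  have h2' : Function.Injective fun n : ℤ => 2 * n + 1 := (add_left_injective 1).comp h2
  refine ((h2.hasSum_range_iff.2 (hf.comp_injective h2).hasSum).add_isCompl ?_
    (h2'.hasSum_range_iff.2 (hf.comp_injective h2').hasSum)).tsum_eq.symm
  simpa using Int.isCompl_even_odd

lemma hasSum_tsum_mul_add {R : Type*} [NormedRing R] [CompleteSpace R] {f g : ℤ → R}
    (hf : Summable fun n => ‖f n‖) (hg : Summable fun n => ‖g n‖) :
    HasSum (fun l => ∑' n, f n * g (n + l)) ((∑' n, f n) * ∑' n, g n) := by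
  let shear : ℤ × ℤ ≃ ℤ × ℤ :=
    { toFun := fun p => (p.2, p.2 + p.1)
      invFun := fun q => (q.2 - q.1, q.1)
      left_inv := fun _ => by simp
      right_inv := fun _ => by simp }
  have h : HasSum (fun p : ℤ × ℤ => f p.2 * g (p.2 + p.1)) ((∑' n, f n) * ∑' n, g n) := by
    rw [tsum_mul_tsum_of_summable_norm hf hg]
    exact shear.hasSum_iff.2 (summable_mul_of_summable_norm hf hg).hasSum
  exact h.prod_fiberwise fun l => (h.summable.prod_factor l).hasSum

noncomputable def sechLatticeSum (c y : ℝ) : ℝ := ∑' n : ℤ, 1 / cosh (y - n * c)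

section SechLatticeSum

variable {c : ℝ}

lemma summable_one_div_cosh_sub_int_mul (hc : 0 < c) (y : ℝ) :
    Summable fun n : ℤ => 1 / cosh (y - n * c) := by
  have hgeom : Summable fun n : ℕ => exp (n * -c) :=
    Real.summable_exp_nat_mul_iff.2 (neg_neg_of_pos hc)
  have hexp : Summable fun n : ℤ => exp (|(n : ℝ)| * -c) :=
    .of_nat_of_neg (by simpa using hgeom) (by simpa using hgeom)
  refine .of_nonneg_of_le (fun n => by positivity) (fun n => ?_) (hexp.mul_left (2 * exp |y|))
  have hdist : |(n : ℝ)| * c ≤ |y - n * c| + |y| := by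
    have h := abs_sub_abs_le_abs_sub (n * c) y
    rw [abs_sub_comm, abs_mul, abs_of_pos hc] at h
    linarith
  calc 1 / cosh (y - n * c) ≤ 2 * exp (-|y - n * c|) := one_div_cosh_le_two_mul_exp_neg_abs _
    _ ≤ 2 * exp |y| * exp (|(n : ℝ)| * -c) := by
      rw [mul_assoc, ← exp_add]
      gcongr
      linarith

lemma sechLatticeSum_pos (hc : 0 < c) (y : ℝ) : 0 < sechLatticeSum c y :=
  (summable_one_div_cosh_sub_int_mul hc y).tsum_pos (fun _ => by positivity) 0 (by positivity)

lemma sechLatticeSum_neg (c y : ℝ) : sechLatticeSum c (-y) = sechLatticeSum c y := by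
  rw [sechLatticeSum, ← (Equiv.neg ℤ).tsum_eq]
  refine tsum_congr fun n => ?_
  rw [Equiv.neg_apply, Int.cast_neg, ← cosh_neg]
  ring_nf

lemma sechLatticeSum_eq_add (hc : 0 < c) (y : ℝ) :
    sechLatticeSum c y = sechLatticeSum (2 * c) y + sechLatticeSum (2 * c) (y - c) := by
  rw [sechLatticeSum, ← tsum_int_even_add_odd (summable_one_div_cosh_sub_int_mul hc y)]
  congr 1 <;> refine tsum_congr fun n => ?_ <;> push_cast <;> ring_nf

lemma hasSum_one_div_cosh_mul_one_div_cosh_shift (hc : 0 < c) (y : ℝ) {k : ℕ} (hk : k ≠ 0) :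
    HasSum (fun N : ℤ => 1 / cosh (y - N * c) * (1 / cosh (y - ((N + k : ℤ) : ℝ) * c)))
      (2 * k / sinh (k * c)) := by
  set u : ℤ → ℝ := fun N => tanh (y - N * c) with hu_def
  have hu : Antitone u := fun m n hmn => tanh_monotone (by gcongr)
  have htop : Tendsto u atTop (𝓝 (-1)) := by
    have h := (tendsto_intCast_atTop_atTop (R := ℝ)).atTop_mul_const hc
    exact tendsto_tanh_atBot.comp
      (tendsto_atBot_add_const_left _ y (tendsto_neg_atTop_atBot.comp h))
  have hbot : Tendsto u atBot (𝓝 1) := by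
    have h :=
      ((tendsto_intCast_atTop_atTop (R := ℝ)).comp tendsto_neg_atBot_atTop).atTop_mul_const hc
    refine tendsto_tanh_atTop.comp ((tendsto_atTop_add_const_left _ y h).congr fun N => ?_)
    simp only [Function.comp_apply, Int.cast_neg]
    ring
  have hkc : (k : ℝ) * c ≠ 0 := mul_ne_zero (Nat.cast_ne_zero.2 hk) hc.ne'
  rw [show 2 * (k : ℝ) / sinh (k * c) = k * (1 - -1) / sinh (k * c) by ring]
  refine ((Int.hasSum_sub_add_natCast_of_antitone hu htop hbot k).div_const _).congr_fun
    fun N => ?_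
  rw [one_div_cosh_mul_one_div_cosh (by contrapose! hkc; push_cast at hkc; linarith), hu_def]
  push_cast
  ring_nf

lemma hasSum_sechLatticeSum_two_mul_mul (hc : 0 < c) (y : ℝ) :
    HasSum (fun j : ℕ => 2 * (2 * j + 1) / sinh ((2 * j + 1) * c))
      (sechLatticeSum (2 * c) y * sechLatticeSum (2 * c) (y - c)) := by
  set t : ℤ → ℝ := fun N => 1 / cosh (y - N * c) with ht_def
  have ht : Summable fun N => ‖t N‖ := (summable_one_div_cosh_sub_int_mul hc y).abs
  have heven : sechLatticeSum (2 * c) y = ∑' n, t (2 * n) :=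
    tsum_congr fun n => by rw [ht_def]; push_cast; ring_nf
  have hodd : sechLatticeSum (2 * c) (y - c) = ∑' n, t (2 * n + 1) :=
    tsum_congr fun n => by rw [ht_def]; push_cast; ring_nf
  have h2 : Function.Injective fun n : ℤ => 2 * n := mul_right_injective₀ two_ne_zero
  have h2' : Function.Injective fun n : ℤ => 2 * n + 1 := (add_left_injective 1).comp h2
  have hprod :=
    (hasSum_tsum_mul_add (ht.comp_injective h2) (ht.comp_injective h2')).nat_add_neg_add_one
  rw [heven, hodd]
  refine hprod.congr_fun fun j => ?_
  -- The shifts `l = j` and `l = -(j + 1)` are the even and odd halves of one telescoping sum.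
  have hshift : HasSum (fun N => t N * t (N + (2 * j + 1 : ℕ))) _ :=
    hasSum_one_div_cosh_mul_one_div_cosh_shift hc y (k := 2 * j + 1) (by omega)
  push_cast at hshift
  rw [← hshift.tsum_eq, ← tsum_int_even_add_odd hshift.summable,
    ← (Equiv.addRight ((j : ℤ) + 1)).tsum_eq
      (fun n => t (2 * n) * t (2 * (n + -((j : ℤ) + 1)) + 1))]
  congr 1 <;> refine tsum_congr fun n => ?_
  · congr 2
    ring
  · rw [mul_comm]
    simp only [Equiv.coe_addRight]
    congr 2 <;> ring

lemma sechLatticeSum_half_le (hc : 0 < c) (y : ℝ) :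
    sechLatticeSum c (c / 2) ≤ sechLatticeSum c y := by
  have hneg : c / 2 - c = -(c / 2) := by ring
  have hconst : sechLatticeSum (2 * c) y * sechLatticeSum (2 * c) (y - c) =
      sechLatticeSum (2 * c) (c / 2) ^ 2 := by
    rw [(hasSum_sechLatticeSum_two_mul_mul hc y).unique
      (hasSum_sechLatticeSum_two_mul_mul hc (c / 2)), hneg, sechLatticeSum_neg, sq]
  have h2c : 0 < 2 * c := by positivity
  rw [sechLatticeSum_eq_add hc, sechLatticeSum_eq_add hc y, hneg, sechLatticeSum_neg]
  nlinarith [sq_nonneg (sechLatticeSum (2 * c) y - sechLatticeSum (2 * c) (y - c)),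
    sechLatticeSum_pos h2c y, sechLatticeSum_pos h2c (y - c), sechLatticeSum_pos h2c (c / 2)]

end SechLatticeSum

lemma tsum_one_div_cosh_ofReal (f : ℤ → ℝ) :
    ∑' n, 1 / Complex.cosh (f n) = ((∑' n, 1 / cosh (f n) : ℝ) : ℂ) := by
  simp [Complex.ofReal_tsum, Complex.ofReal_cosh]

lemma dressedEnergyC_ofReal (γ J h x : ℝ) :
    dressedEnergyC γ J h x =
      ((h / 2 - 2 * π * J * sinh γ / γ * sechLatticeSum (π ^ 2 / γ) (π * x / γ) : ℝ) : ℂ) := by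
  have harg (n : ℤ) : (π : ℂ) * (x - n * π) / γ = ((π * x / γ - n * (π ^ 2 / γ) : ℝ) : ℂ) := by
    push_cast
    ring
  simp only [dressedEnergyC, harg, tsum_one_div_cosh_ofReal, sechLatticeSum]
  push_cast
  rfl

lemma dressedEnergyC_ofReal_sub_I_mul {γ : ℝ} (hγ : γ ≠ 0) (J h x : ℝ) :
    dressedEnergyC γ J h (x - Complex.I * γ) =
      ((h / 2 + 2 * π * J * sinh γ / γ * sechLatticeSum (π ^ 2 / γ) (π * x / γ) : ℝ) : ℂ) := by
  have harg (n : ℤ) : (π : ℂ) * (x - Complex.I * γ - n * π) / γ =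
      ((π * x / γ - n * (π ^ 2 / γ) : ℝ) : ℂ) - π * Complex.I := by
    have hγ' : (γ : ℂ) ≠ 0 := Complex.ofReal_ne_zero.2 hγ
    push_cast
    field_simp
    ring
  simp only [dressedEnergyC, harg, Complex.cosh_sub_pi_mul_I, one_div_neg_eq_neg_one_div,
    tsum_neg, tsum_one_div_cosh_ofReal, sechLatticeSum]
  push_cast
  ring

lemma lowerCriticalField_eq_sechLatticeSum (γ J : ℝ) :
    lowerCriticalField γ J =
      2 * (2 * π * J * sinh γ / γ) * sechLatticeSum (π ^ 2 / γ) (π ^ 2 / γ / 2) := by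
  have harg (n : ℤ) : π ^ 2 * (1 / 2 - n) / γ = π ^ 2 / γ / 2 - n * (π ^ 2 / γ) := by ring
  simp only [lowerCriticalField, sechLatticeSum, harg]
  ring

/-- If `0 ≤ h < h_ℓ`, then `ε̃ < 0` on the real line, while `ε̃(x − iγ)` is real and
strictly positive for every real `x`. -/
theorem dressedEnergyC_sign_below_lower_critical_field (γ J h : ℝ)
    (hγ : 0 < γ) (hJ : 0 < J) (hh0 : 0 ≤ h) (hhl : h < lowerCriticalField γ J) :
    (∀ x : ℝ, (dressedEnergyC γ J h (x : ℂ)).im = 0 ∧ (dressedEnergyC γ J h (x : ℂ)).re < 0) ∧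
    (∀ x : ℝ, (dressedEnergyC γ J h ((x : ℂ) - Complex.I * (γ : ℂ))).im = 0 ∧
      0 < (dressedEnergyC γ J h ((x : ℂ) - Complex.I * (γ : ℂ))).re) := by
  have hc : 0 < π ^ 2 / γ := by positivity
  have hC : 0 < 2 * π * J * sinh γ / γ := by
    have := sinh_pos_iff.2 hγ
    positivity
  rw [lowerCriticalField_eq_sechLatticeSum] at hhl
  refine ⟨fun x => ?_, fun x => ?_⟩
  · rw [dressedEnergyC_ofReal, Complex.ofReal_im, Complex.ofReal_re]
    have := mul_le_mul_of_nonneg_left (sechLatticeSum_half_le hc (π * x / γ)) hC.le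
    exact ⟨rfl, by linarith⟩
  · rw [dressedEnergyC_ofReal_sub_I_mul hγ.ne', Complex.ofReal_im, Complex.ofReal_re]
    have := mul_pos hC (sechLatticeSum_pos hc (π * x / γ))
    exact ⟨rfl, by linarith⟩
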